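/- arXiv:2009.14319 — 6 statements merged into one kernel-verified Lean document; each statement's English description precedes it below -/
import Mathlib

section
/- Let (V,g) be a Euclidean vector space, 𝔤 ⊆ 𝔰𝔬(V) a Lie subalgebra, and 𝔯 : 𝔤 → 𝔤 a self-adjoint linear operator with eigenvalues λ₁ ≤ … ≤ λ_{dim 𝔤}. Let T be a tensor and suppose there is C ≥ 1 such that |L T|² ≤ (1/C)|T^𝔤|²|L|² for all L ∈ 𝔤, where T^𝔤 is defined by g(L, T^𝔤) = L T and |T^𝔤|² = Σ_α |Ξ_α T|² for an orthonormal eigenbasis {Ξ_α} of 𝔯. If ℓ is an integer with 1 ≤ ℓ ≤ ⌊C⌋, κ ≤ 0, and λ₁ + … + λ_ℓ + (C − ℓ)λ_{ℓ+1} ≥ κ(ℓ+1), then Σ_α λ_α |Ξ_α T|² ≥ (κ(ℓ+1)/C)|T^𝔤|². -/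
/-!
Shift every eigenvalue by `λ_ℓ`. Beyond index `ℓ` the shifted eigenvalues are nonnegative, so
those terms only help; below `ℓ` they are nonpositive, so the worst case is that each weight
`|Ξ_α T|²` takes its maximal value `|T^𝔤|² / C`. This gives
`∑ λ_α |Ξ_α T|² ≥ (|T^𝔤|² / C) (λ₁ + … + λ_ℓ + (C - ℓ) λ_{ℓ+1})`, and the hypothesis bounds the
bracket below by `κ(ℓ+1)`.
-/

open Finset

theorem mul_sum_sub_le_sum_sub_mul {N ℓ : ℕ} {lam a : ℕ → ℝ} {m : ℝ}
    (hmono : MonotoneOn lam (Set.Iio N)) (ha : ∀ i < N, 0 ≤ a i) (ham : ∀ i < N, a i ≤ m)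
    (hℓN : ℓ < N) :
    m * ∑ i ∈ range ℓ, (lam i - lam ℓ) ≤ ∑ i ∈ range N, (lam i - lam ℓ) * a i := by
  rw [← sum_range_add_sum_Ico _ hℓN.le, mul_sum]
  have head : ∀ i ∈ range ℓ, m * (lam i - lam ℓ) ≤ (lam i - lam ℓ) * a i := by
    intro i hi
    have hiN : i < N := (mem_range.1 hi).trans hℓN
    rw [mul_comm]
    exact mul_le_mul_of_nonpos_left (ham i hiN)
      (sub_nonpos.2 (hmono hiN hℓN (mem_range.1 hi).le))
  have tail : 0 ≤ ∑ i ∈ Ico ℓ N, (lam i - lam ℓ) * a i := by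
    refine sum_nonneg fun i hi => ?_
    obtain ⟨hℓi, hiN⟩ := mem_Ico.1 hi
    exact mul_nonneg (sub_nonneg.2 (hmono hℓN hiN hℓi)) (ha i hiN)
  linarith [sum_le_sum head]

theorem div_mul_le_sum_mul_of_le_div {N ℓ : ℕ} {lam a : ℕ → ℝ} {C : ℝ} (hC : C ≠ 0)
    (hmono : MonotoneOn lam (Set.Iio N)) (ha : ∀ i < N, 0 ≤ a i)
    (hbound : ∀ i < N, a i ≤ (∑ j ∈ range N, a j) / C) (hℓN : ℓ < N) :
    (∑ j ∈ range N, a j) / C * (∑ i ∈ range ℓ, lam i + (C - ℓ) * lam ℓ) ≤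
      ∑ i ∈ range N, lam i * a i := by
  set S := ∑ j ∈ range N, a j
  have key := mul_sum_sub_le_sum_sub_mul hmono ha hbound hℓN
  rw [sum_sub_distrib, sum_const, card_range, nsmul_eq_mul] at key
  calc S / C * (∑ i ∈ range ℓ, lam i + (C - ℓ) * lam ℓ)
      = lam ℓ * S + S / C * (∑ i ∈ range ℓ, lam i - ℓ * lam ℓ) := by field_simp; ring
    _ ≤ lam ℓ * S + ∑ i ∈ range N, (lam i - lam ℓ) * a i := by gcongr
    _ = ∑ i ∈ range N, lam i * a i := by
      rw [mul_sum, ← sum_add_distrib]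
      exact sum_congr rfl fun i _ => by ring

theorem weighted_bochner_estimate_general (N ℓ : ℕ) (C κ : ℝ) (lam a : ℕ → ℝ)
    (hC : 1 ≤ C)
    (hmono : ∀ i j, i ≤ j → j < N → lam i ≤ lam j)
    (ha : ∀ i, i < N → 0 ≤ a i)
    (hbound : ∀ i, i < N → a i ≤ (1 / C) * ∑ j ∈ Finset.range N, a j)
    (hℓN : ℓ < N)
    (hlam : ∑ i ∈ Finset.range ℓ, lam i + (C - ℓ) * lam ℓ ≥ κ * (ℓ + 1)) :
    ∑ i ∈ Finset.range N, lam i * a i ≥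
      κ * (ℓ + 1) / C * ∑ i ∈ Finset.range N, a i := by
  have hC0 : 0 < C := one_pos.trans_le hC
  have hS : 0 ≤ ∑ i ∈ range N, a i := sum_nonneg fun i hi => ha i (mem_range.1 hi)
  calc κ * (ℓ + 1) / C * ∑ i ∈ range N, a i
      = (∑ i ∈ range N, a i) / C * (κ * (ℓ + 1)) := by ring
    _ ≤ (∑ i ∈ range N, a i) / C * (∑ i ∈ range ℓ, lam i + (C - ℓ) * lam ℓ) := by gcongr
    _ ≤ ∑ i ∈ range N, lam i * a i :=
      div_mul_le_sum_mul_of_le_div hC0.ne' (fun i hi j hj hij => hmono i j hij hj) ha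
        (fun i hi => (hbound i hi).trans_eq (one_div_mul_eq_div _ _)) hℓN

/-- Weighted eigenvalue estimation lemma (Lemma 2.4, nonnegative/κ case), abstract version:
`lam 0 ≤ … ≤ lam (N-1)` are the eigenvalues, `a i = |Ξ_i T|²` are nonnegative with
`a i ≤ (1/C) * S` where `S = ∑ a`.  If `1 ≤ ℓ ≤ ⌊C⌋`, `κ ≤ 0` and
`λ₁ + … + λ_ℓ + (C - ℓ)·λ_{ℓ+1} ≥ κ(ℓ+1)`, then `∑ λ_i a_i ≥ (κ(ℓ+1)/C)·S`. -/
theorem weighted_bochner_estimate (N ℓ : ℕ) (C κ : ℝ) (lam a : ℕ → ℝ)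
    (hC : 1 ≤ C) (hκ : κ ≤ 0)
    (hmono : ∀ i j, i ≤ j → j < N → lam i ≤ lam j)
    (ha : ∀ i, i < N → 0 ≤ a i)
    (hbound : ∀ i, i < N → a i ≤ (1 / C) * ∑ j ∈ Finset.range N, a j)
    (hℓ1 : 1 ≤ ℓ) (hℓC : (ℓ : ℤ) ≤ ⌊C⌋) (hℓN : ℓ < N)
    (hlam : ∑ i ∈ Finset.range ℓ, lam i + (C - ℓ) * lam ℓ ≥ κ * (ℓ + 1)) :
    ∑ i ∈ Finset.range N, lam i * a i ≥
      κ * (ℓ + 1) / C * ∑ i ∈ Finset.range N, a i :=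
  weighted_bochner_estimate_general N ℓ C κ lam a hC hmono ha hbound hℓN hlam
end

section
/- Let λ₁ ≤ … ≤ λ_N be real numbers and a₁, …, a_N nonnegative reals with total sum S = Σ a_α, and suppose a_α ≤ S/C for all α, where C ≥ 1 is real. If ℓ is an integer with 1 ≤ ℓ ≤ ⌊C⌋ and λ₁ + … + λ_ℓ + (C − ℓ)λ_{ℓ+1} > 0, then Σ_α λ_α a_α > 0 unless S = 0. -/
/-!
Centre the weighted sum at `λ_ℓ`: `∑ λ_α a_α = λ_ℓ S + ∑ (λ_α - λ_ℓ) a_α`. The terms with `α ≥ ℓ`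
are nonnegative by monotonicity, and for `α < ℓ` the nonpositive factor `λ_α - λ_ℓ` is multiplied
by at most `S / C`. This gives `∑ λ_α a_α ≥ (S / C) (λ₁ + … + λ_ℓ + (C - ℓ) λ_{ℓ+1})`.
-/

open Finset

theorem sum_range_sub_mul_le_sum_sub_mul {N ℓ : ℕ} {lam a : ℕ → ℝ} {b : ℝ}
    (hmono : ∀ i j, i ≤ j → j < N → lam i ≤ lam j) (ha : ∀ i, i < N → 0 ≤ a i)
    (hb : ∀ i, i < N → a i ≤ b) (hℓN : ℓ < N) :
    ∑ i ∈ range ℓ, (lam i - lam ℓ) * b ≤ ∑ i ∈ range N, (lam i - lam ℓ) * a i := by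
  rw [← sum_range_add_sum_Ico _ hℓN.le]
  have head : ∑ i ∈ range ℓ, (lam i - lam ℓ) * b ≤ ∑ i ∈ range ℓ, (lam i - lam ℓ) * a i := by
    refine sum_le_sum fun i hi => ?_
    have hiℓ := mem_range.mp hi
    exact mul_le_mul_of_nonpos_left (hb i (hiℓ.trans hℓN))
      (sub_nonpos.mpr (hmono i ℓ hiℓ.le hℓN))
  have tail : 0 ≤ ∑ i ∈ Ico ℓ N, (lam i - lam ℓ) * a i := by
    refine sum_nonneg fun i hi => ?_
    obtain ⟨hℓi, hiN⟩ := mem_Ico.mp hi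
    exact mul_nonneg (sub_nonneg.mpr (hmono ℓ i hℓi hiN)) (ha i hiN)
  linarith

theorem weighted_bochner_estimate_pos_general (N ℓ : ℕ) (C : ℝ) (lam a : ℕ → ℝ)
    (hC : 1 ≤ C)
    (hmono : ∀ i j, i ≤ j → j < N → lam i ≤ lam j)
    (ha : ∀ i, i < N → 0 ≤ a i)
    (hbound : ∀ i, i < N → a i ≤ (∑ j ∈ Finset.range N, a j) / C)
    (hℓN : ℓ < N)
    (hlam : ∑ i ∈ Finset.range ℓ, lam i + (C - ℓ) * lam ℓ > 0)
    (hS : ∑ i ∈ Finset.range N, a i ≠ 0) :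
    ∑ i ∈ Finset.range N, lam i * a i > 0 := by
  set S := ∑ j ∈ range N, a j
  have hC0 : 0 < C := one_pos.trans_le hC
  have hS0 : 0 < S := (sum_nonneg fun i hi => ha i (mem_range.mp hi)).lt_of_ne' hS
  have centred : ∑ i ∈ range N, lam i * a i = lam ℓ * S + ∑ i ∈ range N, (lam i - lam ℓ) * a i := by
    simp only [sub_mul, sum_sub_distrib, S, mul_sum]
    ring
  have lower_bound_eq : ∑ i ∈ range ℓ, (lam i - lam ℓ) * (S / C) + lam ℓ * S
      = (∑ i ∈ range ℓ, lam i + (C - ℓ) * lam ℓ) * (S / C) := by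
    rw [← sum_mul, sum_sub_distrib, sum_const, card_range, nsmul_eq_mul]
    field_simp
    ring
  have hpos : 0 < (∑ i ∈ range ℓ, lam i + (C - ℓ) * lam ℓ) * (S / C) :=
    mul_pos hlam (div_pos hS0 hC0)
  linarith [sum_range_sub_mul_le_sum_sub_mul hmono ha hbound hℓN]

/-- Strict case of the weighted eigenvalue estimation lemma (Lemma 2.4):
if `λ₁ + … + λ_ℓ + (C - ℓ)·λ_{ℓ+1} > 0` then `∑ λ_i a_i > 0` unless `S = ∑ a_i = 0`. -/
theorem weighted_bochner_estimate_pos (N ℓ : ℕ) (C : ℝ) (lam a : ℕ → ℝ)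
    (hC : 1 ≤ C)
    (hmono : ∀ i j, i ≤ j → j < N → lam i ≤ lam j)
    (ha : ∀ i, i < N → 0 ≤ a i)
    (hbound : ∀ i, i < N → a i ≤ (∑ j ∈ Finset.range N, a j) / C)
    (hℓ1 : 1 ≤ ℓ) (hℓC : (ℓ : ℤ) ≤ ⌊C⌋) (hℓN : ℓ < N)
    (hlam : ∑ i ∈ Finset.range ℓ, lam i + (C - ℓ) * lam ℓ > 0)
    (hS : ∑ i ∈ Finset.range N, a i ≠ 0) :
    ∑ i ∈ Finset.range N, lam i * a i > 0 :=
  weighted_bochner_estimate_pos_general N ℓ C lam a hC hmono ha hbound hℓN hlam hS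
end

section
/- With σ_j the j-th elementary symmetric polynomial in ε₁, …, ε_n and τ_{a,b} := σ_{n−a+1}σ_{n−b} − σ_{n−a}σ_{n−b+1}, one has ∏_{i=1}^n (s − ε_i) · ∏_{i=1}^n (t − ε_i) · (s − t) = Σ_{a,b=0}^{n+1} (−1)^{a+b+1} s^a t^b τ_{a,b}, and in particular τ_{a,b} = −τ_{b,a}. -/
/-- The `j`-th elementary symmetric polynomial in `ε₁, …, ε_n`, defined for an
integer index `j`, with the convention `σ_j = 0` for `j < 0` (and automatically
`σ_j = 0` for `j > n`). -/
noncomputable def esymmZ {R : Type*} [CommRing R] {n : ℕ} (ε : Fin n → R) (j : ℤ) : R :=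
  if hj : 0 ≤ j then
    ∑ A ∈ Finset.univ.powersetCard j.toNat, ∏ i ∈ A, ε i
  else 0

/-- `τ_{a,b} = σ_{n-a+1} σ_{n-b} - σ_{n-a} σ_{n-b+1}`. -/
noncomputable def tauZ {R : Type*} [CommRing R] {n : ℕ} (ε : Fin n → R) (a b : ℤ) : R :=
  esymmZ ε ((n : ℤ) - a + 1) * esymmZ ε ((n : ℤ) - b) -
    esymmZ ε ((n : ℤ) - a) * esymmZ ε ((n : ℤ) - b + 1)

/-!
By Vieta, `∏ (x - εᵢ) = (-1)ⁿ P(x)` with `P(x) = ∑ₐ cₐ xᵃ`, `cₐ = (-1)ᵃ σ_{n-a}`, and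
`x P(x) = ∑ₐ dₐ xᵃ` with `dₐ = (-1)^{a+1} σ_{n-a+1}`; since `σ` vanishes outside `[0, n]`, both
sums can be taken over `a ≤ n + 1`. Writing `P(s) P(t) (s - t) = (s P(s)) P(t) - P(s) (t P(t))`,
the coefficient of `sᵃ tᵇ` is `dₐ c_b - cₐ d_b = (-1)^{a+b+1} τ_{a,b}`.
-/

open Finset Polynomial

theorem sum_mul_sum_mul_sub_eq_sum_sum {R : Type*} [CommRing R] {m : ℕ} (c d : ℕ → R) (s t : R)
    (hs : (∑ a ∈ range m, c a * s ^ a) * s = ∑ a ∈ range m, d a * s ^ a)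
    (ht : (∑ a ∈ range m, c a * t ^ a) * t = ∑ a ∈ range m, d a * t ^ a) :
    (∑ a ∈ range m, c a * s ^ a) * (∑ b ∈ range m, c b * t ^ b) * (s - t) =
      ∑ a ∈ range m, ∑ b ∈ range m, (d a * c b - c a * d b) * s ^ a * t ^ b := by
  calc _ = (∑ a ∈ range m, c a * s ^ a) * s * (∑ b ∈ range m, c b * t ^ b) -
        (∑ a ∈ range m, c a * s ^ a) * ((∑ b ∈ range m, c b * t ^ b) * t) := by ring
    _ = _ := by
      rw [hs, ht, sum_mul_sum, sum_mul_sum, ← sum_sub_distrib]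
      refine sum_congr rfl fun a _ => ?_
      rw [← sum_sub_distrib]
      exact sum_congr rfl fun b _ => by ring

section

variable {R : Type*} [CommRing R] {n : ℕ} (ε : Fin n → R)

theorem esymmZ_natCast (j : ℕ) : esymmZ ε j = (univ.val.map ε).esymm j := by
  rw [Finset.esymm_map_val]; simp [esymmZ]

theorem esymmZ_of_neg {j : ℤ} (hj : j < 0) : esymmZ ε j = 0 :=
  dif_neg hj.not_ge

theorem esymmZ_of_lt {j : ℤ} (hj : n < j) : esymmZ ε j = 0 := by
  lift j to ℕ using by omega
  rw [esymmZ_natCast, Multiset.esymm, Multiset.powersetCard_eq_empty _ (by simpa using hj)]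
  simp

theorem prod_sub_eq_neg_one_pow_mul_sum_esymmZ (x : R) :
    ∏ i, (x - ε i) =
      (-1) ^ n * ∑ a ∈ range (n + 2), (-1) ^ a * esymmZ ε (n - a) * x ^ a := by
  have hcard : Multiset.card (univ.val.map ε) = n := by simp
  set p : R[X] := ((univ.val.map ε).map (X - C ·)).prod
  have hdeg : p.natDegree ≤ n := by
    nontriviality R
    exact ((natDegree_multiset_prod_X_sub_C_eq_card _).trans hcard).le
  have heval : ∏ i, (x - ε i) = p.eval x := by
    rw [eval_multiset_prod, Multiset.map_map, Multiset.map_map, Finset.prod_eq_multiset_prod]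
    simp only [Function.comp_def, eval_sub, eval_X, eval_C]
  rw [heval, eval_eq_sum_range' (n := n + 2) (by omega), mul_sum]
  refine sum_congr rfl fun a _ => ?_
  rcases le_or_gt a n with h | h
  · rw [Multiset.prod_X_sub_C_coeff _ (by rwa [hcard]), hcard, ← esymmZ_natCast, Nat.cast_sub h]
    have hsign : (-1 : R) ^ n * (-1) ^ a = (-1) ^ (n - a) := by
      rw [← pow_add, show n + a = n - a + 2 * a by omega, pow_add, pow_mul, neg_one_sq,
        one_pow, mul_one]
    rw [← hsign]
    ring
  · rw [coeff_eq_zero_of_natDegree_lt (by omega), esymmZ_of_neg _ (by omega)]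
    simp

theorem sum_esymmZ_mul_self (x : R) :
    (∑ a ∈ range (n + 2), (-1) ^ a * esymmZ ε (n - a) * x ^ a) * x =
      ∑ a ∈ range (n + 2), (-1) ^ (a + 1) * esymmZ ε (n - a + 1) * x ^ a := by
  rw [sum_range_succ, add_mul, sum_mul,
    sum_range_succ' (fun a => (-1) ^ (a + 1) * esymmZ ε (n - a + 1) * x ^ a),
    esymmZ_of_neg ε (by omega), esymmZ_of_lt ε (by omega)]
  simp only [mul_zero, zero_mul, add_zero]
  refine sum_congr rfl fun a _ => ?_
  rw [show (n : ℤ) - (a + 1 : ℕ) + 1 = n - a by push_cast; ring]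
  ring

end

/-- `∏ (s - εᵢ) · ∏ (t - εᵢ) · (s - t) = Σ_{a,b=0}^{n+1} (-1)^{a+b+1} s^a t^b τ_{a,b}`,
and `τ` is antisymmetric. -/
theorem prod_sub_mul_prod_sub_eq_sum_tau {R : Type*} [CommRing R] (n : ℕ)
    (s t : R) (ε : Fin n → R) :
    ((∏ i : Fin n, (s - ε i)) * (∏ i : Fin n, (t - ε i)) * (s - t) =
      ∑ a ∈ Finset.range (n + 2), ∑ b ∈ Finset.range (n + 2),
        (-1 : R) ^ (a + b + 1) * s ^ a * t ^ b * tauZ ε a b) ∧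
    (∀ a b : ℤ, tauZ ε a b = -tauZ ε b a) := by
  refine ⟨?_, fun a b => by unfold tauZ; ring⟩
  have hsign : (-1 : R) ^ n * (-1) ^ n = 1 := by
    rw [← pow_add, ← two_mul, pow_mul, neg_one_sq, one_pow]
  rw [prod_sub_eq_neg_one_pow_mul_sum_esymmZ, prod_sub_eq_neg_one_pow_mul_sum_esymmZ,
    mul_mul_mul_comm, hsign, one_mul,
    sum_mul_sum_mul_sub_eq_sum_sum (fun a => (-1) ^ a * esymmZ ε (n - a))
      (fun a => (-1) ^ (a + 1) * esymmZ ε (n - a + 1)) s t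
      (sum_esymmZ_mul_self ε s) (sum_esymmZ_mul_self ε t)]
  refine sum_congr rfl fun a _ => sum_congr rfl fun b _ => ?_
  unfold tauZ
  ring
end

section
/- Let χ^{p,q} = Σ_{I_p, J_q} ε_{I_p} \bar{ε}_{J_q}, where the sum is over subsets I_p ⊆ {1,…,n} of size p and J_q ⊆ {1,…,n} of size q, ε_{I} = ∏_{i∈I} ε_i and \bar{ε}_{J} = ∏_{j∈J} ε_j^{−1}, with ε_i on the unit circle (or invertible elements with \bar{ε}_i = ε_i^{−1}). Then χ^{p,q} − χ^{p−1,q−1} = (σ_p σ_{n−q} − σ_{p−1} σ_{n−q+1}) / (ε₁⋯ε_n), where σ_j is the j-th elementary symmetric polynomial in ε₁, …, ε_n. -/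
/-!
The double sum `χ^{p,q}` factors as `σ_p · τ_q` with `τ_q = Σ_{|J|=q} ε̄_J`, and
complementation `J ↦ Jᶜ` gives `τ_q = σ_{n-q} / (ε₁⋯ε_n)`. With `τ_{q-1} = σ_{n-q+1} / (ε₁⋯ε_n)`
the identity is then a matter of collecting terms.
-/

open Finset

section

variable {ι : Type*} [Fintype ι]

theorem Finset.sum_powersetCard_compl [DecidableEq ι] {M : Type*} [AddCommMonoid M]
    {k : ℕ} (hk : k ≤ Fintype.card ι) (f : Finset ι → M) :
    ∑ s ∈ univ.powersetCard k, f sᶜ = ∑ s ∈ univ.powersetCard (Fintype.card ι - k), f s := by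
  refine sum_nbij' (fun s ↦ sᶜ) (fun s ↦ sᶜ) ?_ ?_ (fun s _ ↦ compl_compl s)
    (fun s _ ↦ compl_compl s) (fun s _ ↦ rfl)
  all_goals
    intro s hs
    simp only [mem_powersetCard_univ, card_compl] at hs ⊢
    omega

theorem Finset.prod_inv_eq_prod_compl_div [DecidableEq ι] {K : Type*} [Field K]
    {ε : ι → K} (hε : ∀ i, ε i ≠ 0) (s : Finset ι) :
    ∏ j ∈ s, (ε j)⁻¹ = (∏ i ∈ sᶜ, ε i) / ∏ i, ε i := by
  have hs : ∏ j ∈ s, ε j ≠ 0 := prod_ne_zero_iff.2 fun i _ ↦ hε i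
  have hsc : ∏ i ∈ sᶜ, ε i ≠ 0 := prod_ne_zero_iff.2 fun i _ ↦ hε i
  rw [prod_inv_distrib, ← prod_compl_mul_prod s]
  field_simp

theorem Finset.sum_powersetCard_prod_inv {K : Type*} [Field K] {ε : ι → K}
    (hε : ∀ i, ε i ≠ 0) {q : ℕ} (hq : q ≤ Fintype.card ι) :
    ∑ J ∈ univ.powersetCard q, ∏ j ∈ J, (ε j)⁻¹ =
      (∑ A ∈ univ.powersetCard (Fintype.card ι - q), ∏ i ∈ A, ε i) / ∏ i, ε i := by
  classical
  rw [← sum_powersetCard_compl hq, sum_div]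
  exact sum_congr rfl fun s _ ↦ prod_inv_eq_prod_compl_div hε s

end

theorem chi_diff_eq_general (K : Type*) [Field K] (n p q : ℕ)
    (hq : 1 ≤ q) (hqn : q ≤ n) (ε : Fin n → K) (hε : ∀ i, ε i ≠ 0) :
    (∑ I ∈ univ.powersetCard p, ∑ J ∈ univ.powersetCard q,
        (∏ i ∈ I, ε i) * ∏ j ∈ J, (ε j)⁻¹) -
      (∑ I ∈ univ.powersetCard (p - 1), ∑ J ∈ univ.powersetCard (q - 1),
        (∏ i ∈ I, ε i) * ∏ j ∈ J, (ε j)⁻¹) =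
    ((∑ A ∈ univ.powersetCard p, ∏ i ∈ A, ε i) *
        (∑ A ∈ univ.powersetCard (n - q), ∏ i ∈ A, ε i) -
      (∑ A ∈ univ.powersetCard (p - 1), ∏ i ∈ A, ε i) *
        (∑ A ∈ univ.powersetCard (n - q + 1), ∏ i ∈ A, ε i)) / ∏ i : Fin n, ε i := by
  have hcard : n - (q - 1) = n - q + 1 := by omega
  rw [← sum_mul_sum, ← sum_mul_sum,
    sum_powersetCard_prod_inv hε (by rwa [Fintype.card_fin]),
    sum_powersetCard_prod_inv hε (by rw [Fintype.card_fin]; omega), Fintype.card_fin, hcard]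
  ring

/-- `χ^{p,q} - χ^{p-1,q-1} = (σ_p σ_{n-q} - σ_{p-1} σ_{n-q+1}) / (ε₁⋯ε_n)`, where
`χ^{p,q} = Σ_{|I|=p, |J|=q} ε_I \bar{ε}_J` with `\bar{ε}_j = ε_j⁻¹` and `σ_j` the
elementary symmetric polynomials of `ε₁, …, ε_n`. -/
theorem chi_diff_eq (K : Type*) [Field K] (n p q : ℕ) (hp : 1 ≤ p) (hpn : p ≤ n)
    (hq : 1 ≤ q) (hqn : q ≤ n) (ε : Fin n → K) (hε : ∀ i, ε i ≠ 0) :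
    (∑ I ∈ univ.powersetCard p, ∑ J ∈ univ.powersetCard q,
        (∏ i ∈ I, ε i) * ∏ j ∈ J, (ε j)⁻¹) -
      (∑ I ∈ univ.powersetCard (p - 1), ∑ J ∈ univ.powersetCard (q - 1),
        (∏ i ∈ I, ε i) * ∏ j ∈ J, (ε j)⁻¹) =
    ((∑ A ∈ univ.powersetCard p, ∏ i ∈ A, ε i) *
        (∑ A ∈ univ.powersetCard (n - q), ∏ i ∈ A, ε i) -
      (∑ A ∈ univ.powersetCard (p - 1), ∏ i ∈ A, ε i) *
        (∑ A ∈ univ.powersetCard (n - q + 1), ∏ i ∈ A, ε i)) / ∏ i : Fin n, ε i :=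
  chi_diff_eq_general K n p q hq hqn ε hε
end

section
/- The character of the space of (p,q)-forms Λ^{p,q} V* = Λ^p V* ⊗ Λ^q \bar{V}* under the diagonal torus of U(n) admits the decomposition χ^{p,q} = Σ_{k=0}^{min{p,q}} C(n − (p+q−2k), k) Σ_{I_{p−k} ∩ J_{q−k} = ∅} ε_{I_{p−k}} \bar{ε}_{J_{q−k}}, where the inner sum is over disjoint subsets I of size p−k and J of size q−k of {1,…,n}, and C(m, k) is the binomial coefficient. -/
/-!
Split a pair `(I, J)` as `I = A ∪ S`, `J = B ∪ S` with `S = I ∩ J`, `A = I \ J`, `B = J \ I`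
pairwise disjoint. The factors of `ε_I ε̄_J` indexed by `S` cancel, so the weight only sees
`(A, B)`; conversely, for disjoint `A`, `B` of sizes `p - k`, `q - k`, the common part `S` ranges
over the `k`-subsets of `(A ∪ B)ᶜ`, which has `n - (p + q - 2k)` elements.
-/

open Finset

namespace Finset

variable {α : Type*} [DecidableEq α] {A B S : Finset α}

theorem union_inter_union_eq_right_of_disjoint (h : Disjoint A B) : (A ∪ S) ∩ (B ∪ S) = S := by
  rw [← inter_union_distrib_right, disjoint_iff_inter_eq_empty.1 h, empty_union]

theorem union_sdiff_union_eq_left_of_disjoint (hAB : Disjoint A B) (hAS : Disjoint A S) :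
    (A ∪ S) \ (B ∪ S) = A := by
  rw [union_sdiff_distrib, sdiff_eq_self_of_disjoint (disjoint_union_right.2 ⟨hAB, hAS⟩),
    sdiff_eq_empty_iff_subset.2 subset_union_right, union_empty]

theorem prod_union_mul_prod_union_inv {G : Type*} [CommGroupWithZero G] {ε : α → G}
    (hε : ∀ i ∈ S, ε i ≠ 0) (hA : Disjoint A S) (hB : Disjoint B S) :
    (∏ i ∈ A ∪ S, ε i) * ∏ j ∈ B ∪ S, (ε j)⁻¹ = (∏ i ∈ A, ε i) * ∏ j ∈ B, (ε j)⁻¹ := by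
  rw [prod_union hA, prod_union hB, mul_mul_mul_comm, ← prod_mul_distrib,
    prod_eq_one fun i hi => mul_inv_cancel₀ (hε i hi), mul_one]

variable [Fintype α] {M : Type*} [AddCommMonoid M]

theorem sum_filter_card_inter_eq_sum_sigma_disjoint {p q k : ℕ} (hkp : k ≤ p) (hkq : k ≤ q)
    (f : Finset α → Finset α → M) :
    ∑ x ∈ univ.powersetCard p ×ˢ univ.powersetCard q with #(x.1 ∩ x.2) = k, f x.1 x.2 =
      ∑ y ∈ ({x ∈ (univ.powersetCard (p - k) ×ˢ univ.powersetCard (q - k) :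
          Finset (Finset α × Finset α)) | Disjoint x.1 x.2}).sigma
            fun x => (x.1 ∪ x.2)ᶜ.powersetCard k, f (y.1.1 ∪ y.2) (y.1.2 ∪ y.2) := by
  refine sum_nbij' (fun x => ⟨(x.1 \ x.2, x.2 \ x.1), x.1 ∩ x.2⟩)
    (fun y => (y.1.1 ∪ y.2, y.1.2 ∪ y.2)) ?_ ?_ ?_ ?_ ?_
  · rintro ⟨I, J⟩ h
    simp only [mem_filter, mem_product, mem_sigma, mem_powersetCard, subset_univ, true_and,
      subset_compl_iff_disjoint_right, disjoint_union_right] at h ⊢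
    obtain ⟨⟨rfl, rfl⟩, rfl⟩ := h
    refine ⟨⟨⟨?_, ?_⟩, disjoint_sdiff_sdiff⟩, ⟨(disjoint_sdiff_inter I J).symm, ?_⟩, rfl⟩
    · rw [← card_sdiff_add_card_inter I J, Nat.add_sub_cancel]
    · rw [← card_sdiff_add_card_inter J I, inter_comm, Nat.add_sub_cancel]
    · rw [inter_comm]; exact (disjoint_sdiff_inter J I).symm
  · rintro ⟨⟨A, B⟩, S⟩ h
    simp only [mem_filter, mem_product, mem_sigma, mem_powersetCard, subset_univ, true_and,
      subset_compl_iff_disjoint_right, disjoint_union_right] at h ⊢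
    obtain ⟨⟨⟨hA, hB⟩, hAB⟩, ⟨hSA, hSB⟩, hS⟩ := h
    refine ⟨⟨?_, ?_⟩, ?_⟩
    · rw [card_union_of_disjoint hSA.symm, hA, hS]
      exact Nat.sub_add_cancel hkp
    · rw [card_union_of_disjoint hSB.symm, hB, hS]
      exact Nat.sub_add_cancel hkq
    · rw [union_inter_union_eq_right_of_disjoint hAB, hS]
  · rintro ⟨I, J⟩ -
    rw [sdiff_union_inter, inter_comm, sdiff_union_inter]
  · rintro ⟨⟨A, B⟩, S⟩ h
    simp only [mem_filter, mem_product, mem_sigma, mem_powersetCard, subset_univ, true_and,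
      subset_compl_iff_disjoint_right, disjoint_union_right] at h
    obtain ⟨⟨-, hAB⟩, ⟨hSA, hSB⟩, -⟩ := h
    simp only [union_inter_union_eq_right_of_disjoint hAB,
      union_sdiff_union_eq_left_of_disjoint hAB hSA.symm,
      union_sdiff_union_eq_left_of_disjoint hAB.symm hSB.symm]
  · rintro ⟨I, J⟩ -
    rw [sdiff_union_inter, inter_comm, sdiff_union_inter]

theorem sum_powersetCard_sum_powersetCard_eq_sum_disjoint_union (p q : ℕ)
    (f : Finset α → Finset α → M) :
    ∑ I ∈ univ.powersetCard p, ∑ J ∈ univ.powersetCard q, f I J =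
      ∑ k ∈ range (min p q + 1), ∑ A ∈ univ.powersetCard (p - k),
        ∑ B ∈ univ.powersetCard (q - k),
          if Disjoint A B then ∑ S ∈ (A ∪ B)ᶜ.powersetCard k, f (A ∪ S) (B ∪ S) else 0 := by
  have inter_card_mem :
      ∀ x ∈ (univ.powersetCard p ×ˢ univ.powersetCard q : Finset (Finset α × Finset α)),
        #(x.1 ∩ x.2) ∈ range (min p q + 1) := by
    rintro ⟨I, J⟩ h
    rw [mem_product, mem_powersetCard_univ, mem_powersetCard_univ] at h
    rw [mem_range, Nat.lt_succ_iff, ← h.1, ← h.2]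
    exact le_min (card_le_card inter_subset_left) (card_le_card inter_subset_right)
  rw [← sum_product', ← sum_fiberwise_of_maps_to inter_card_mem]
  refine sum_congr rfl fun k hk => ?_
  rw [mem_range, Nat.lt_succ_iff, le_min_iff] at hk
  rw [sum_filter_card_inter_eq_sum_sigma_disjoint hk.1 hk.2, sum_sigma, sum_filter, sum_product]

end Finset

theorem chi_pq_decomposition_general (K : Type*) [Field K] (n p q : ℕ)
    (ε : Fin n → K) (hε : ∀ i, ε i ≠ 0) :
    ∑ I ∈ univ.powersetCard p, ∑ J ∈ univ.powersetCard q,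
        (∏ i ∈ I, ε i) * ∏ j ∈ J, (ε j)⁻¹ =
      ∑ k ∈ range (min p q + 1),
        ((n - (p + q - 2 * k)).choose k : K) *
          ∑ I ∈ univ.powersetCard (p - k), ∑ J ∈ univ.powersetCard (q - k),
            if Disjoint I J then (∏ i ∈ I, ε i) * ∏ j ∈ J, (ε j)⁻¹ else 0 := by
  rw [sum_powersetCard_sum_powersetCard_eq_sum_disjoint_union]
  refine sum_congr rfl fun k hk => ?_
  rw [mem_range, Nat.lt_succ_iff, le_min_iff] at hk
  simp_rw [mul_sum]
  refine sum_congr rfl fun A hA => sum_congr rfl fun B hB => ?_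
  rw [mem_powersetCard_univ] at hA hB
  split_ifs with hAB
  · have hcard : #(A ∪ B)ᶜ = n - (p + q - 2 * k) := by
      rw [card_compl, card_union_of_disjoint hAB, hA, hB, Fintype.card_fin]
      omega
    have hweight : ∀ S ∈ (A ∪ B)ᶜ.powersetCard k,
        (∏ i ∈ A ∪ S, ε i) * ∏ j ∈ B ∪ S, (ε j)⁻¹ = (∏ i ∈ A, ε i) * ∏ j ∈ B, (ε j)⁻¹ := by
      intro S hS
      rw [mem_powersetCard, subset_compl_iff_disjoint_right, disjoint_union_right] at hS
      exact prod_union_mul_prod_union_inv (fun i _ => hε i) hS.1.1.symm hS.1.2.symm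
    rw [sum_congr rfl hweight, sum_const, card_powersetCard, hcard, nsmul_eq_mul]
  · rw [mul_zero]

/-- Decomposition of the character `χ^{p,q}` of the torus of `U(n)` on `(p,q)`-forms:
`χ^{p,q} = Σ_{k=0}^{min(p,q)} C(n-(p+q-2k), k) Σ_{I ∩ J = ∅, |I|=p-k, |J|=q-k} ε_I \bar{ε}_J`. -/
theorem chi_pq_decomposition (K : Type*) [Field K] (n p q : ℕ) (hpn : p ≤ n) (hqn : q ≤ n)
    (ε : Fin n → K) (hε : ∀ i, ε i ≠ 0) :
    ∑ I ∈ univ.powersetCard p, ∑ J ∈ univ.powersetCard q,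
        (∏ i ∈ I, ε i) * ∏ j ∈ J, (ε j)⁻¹ =
      ∑ k ∈ range (min p q + 1),
        ((n - (p + q - 2 * k)).choose k : K) *
          ∑ I ∈ univ.powersetCard (p - k), ∑ J ∈ univ.powersetCard (q - k),
            if Disjoint I J then (∏ i ∈ I, ε i) * ∏ j ∈ J, (ε j)⁻¹ else 0 :=
  chi_pq_decomposition_general K n p q ε hε
end

section
/- Let 𝔯 : 𝔤 → 𝔤 be a self-adjoint operator on a Lie subalgebra 𝔤 ⊆ 𝔰𝔬(V) with orthonormal eigenbasis {Ξ_α} and eigenvalues {λ_α}, and let R be the corresponding symmetric bilinear form on 𝔤. Then for L ∈ 𝔤, |LR|² = 2 Σ_{α<β} (λ_α − λ_β)² g([L, Ξ_α], Ξ_β)², where L acts on R as a (0,4)-tensor/bilinear form by the natural derivative action. -/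
/-!
Write `c α β = g([L, Ξ α], Ξ β)`. By orthonormality of the eigenbasis each sum over `γ` collapses
to one term, so `(LR)(Ξ α, Ξ β) = -λ_β c α β - λ_α c β α`. Since `L` is skew, `ad L` is skew for
the trace form, so `c` is antisymmetric and the entry equals `(λ_α - λ_β) c α β` up to sign. The
squared entries form a symmetric array with zero diagonal, so their full double sum is twice the
sum over `α < β`.
-/

open Matrix

/-- The inner product on `Λ²ℝ^m ≅ 𝔰𝔬(m)`: `⟨A, B⟩ = ½ tr(Aᵀ B)`. -/
noncomputable def form2IP {m : ℕ} (A B : Matrix (Fin m) (Fin m) ℝ) : ℝ :=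
  (1 / 2) * (Aᵀ * B).trace

open Finset in
theorem Finset.sum_sum_eq_two_nsmul_sum_sum_Ioi {ι M : Type*} [Fintype ι] [LinearOrder ι]
    [LocallyFiniteOrderTop ι] [LocallyFiniteOrderBot ι] [AddCommMonoid M] (f : ι → ι → M)
    (hsymm : ∀ i j, f i j = f j i) (hdiag : ∀ i, f i i = 0) :
    ∑ i, ∑ j, f i j = 2 • ∑ i, ∑ j ∈ Ioi i, f i j := by
  calc ∑ i, ∑ j, f i j = ∑ i, ∑ j ∈ {i}ᶜ, f j i := by
        refine sum_congr rfl fun i _ => ?_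
        rw [← sum_compl_add_sum {i}, sum_singleton, hdiag, add_zero]
        exact sum_congr rfl fun j _ => hsymm i j
    _ = ∑ i, ∑ j ∈ Ioi i, (f j i + f i j) := (sum_sum_Ioi_add_eq_sum_sum_off_diag f).symm
    _ = 2 • ∑ i, ∑ j ∈ Ioi i, f i j := by
        simp only [smul_sum]
        exact sum_congr rfl fun i _ => sum_congr rfl fun j _ => by rw [hsymm j i, two_nsmul]

theorem Matrix.transpose_eq_neg_of_mem_span {n R : Type*} [CommRing R]
    {s : Set (Matrix n n R)} (hs : ∀ A ∈ s, Aᵀ = -A) {L : Matrix n n R}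
    (hL : L ∈ Submodule.span R s) : Lᵀ = -L := by
  induction hL using Submodule.span_induction with
  | mem A hA => exact hs A hA
  | zero => simp
  | add A B _ _ hA hB => rw [transpose_add, hA, hB, neg_add]
  | smul c A _ hA => rw [transpose_smul, hA, smul_neg]

theorem form2IP_comm {m : ℕ} (A B : Matrix (Fin m) (Fin m) ℝ) : form2IP A B = form2IP B A := by
  rw [form2IP, form2IP, ← trace_transpose, transpose_mul, transpose_transpose]

theorem form2IP_lie_left {m : ℕ} {L : Matrix (Fin m) (Fin m) ℝ} (hL : Lᵀ = -L)
    (A B : Matrix (Fin m) (Fin m) ℝ) :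
    form2IP (L * A - A * L) B = -form2IP A (L * B - B * L) := by
  simp only [form2IP, transpose_sub, transpose_mul, hL, Matrix.mul_neg, Matrix.neg_mul,
    Matrix.sub_mul, Matrix.mul_sub, trace_sub, trace_neg, Matrix.mul_assoc]
  rw [trace_mul_comm L, Matrix.mul_assoc]
  ring

theorem norm_sq_LR_general (m N : ℕ) (Ξ : Fin N → Matrix (Fin m) (Fin m) ℝ) (lam : Fin N → ℝ)
    (hskew : ∀ α, (Ξ α)ᵀ = -Ξ α)
    (horth : ∀ α β, form2IP (Ξ α) (Ξ β) = if α = β then 1 else 0)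
    (L : Matrix (Fin m) (Fin m) ℝ)
    (hL : L ∈ Submodule.span ℝ (Set.range Ξ)) :
    ∑ α : Fin N, ∑ β : Fin N,
        (-(∑ γ : Fin N, lam γ * form2IP (L * Ξ α - Ξ α * L) (Ξ γ) * form2IP (Ξ β) (Ξ γ)) -
          ∑ γ : Fin N, lam γ * form2IP (Ξ α) (Ξ γ) * form2IP (L * Ξ β - Ξ β * L) (Ξ γ)) ^ 2 =
      2 * ∑ α : Fin N, ∑ β ∈ Finset.Ioi α,
        (lam α - lam β) ^ 2 * (form2IP (L * Ξ α - Ξ α * L) (Ξ β)) ^ 2 := by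
  have hLskew : Lᵀ = -L := transpose_eq_neg_of_mem_span (Set.forall_mem_range.2 hskew) hL
  have hanti : ∀ α β, form2IP (L * Ξ α - Ξ α * L) (Ξ β) = -form2IP (L * Ξ β - Ξ β * L) (Ξ α) :=
    fun α β => by rw [form2IP_lie_left hLskew, form2IP_comm]
  have hterm : ∀ α β,
      (-(∑ γ : Fin N, lam γ * form2IP (L * Ξ α - Ξ α * L) (Ξ γ) * form2IP (Ξ β) (Ξ γ)) -
        ∑ γ : Fin N, lam γ * form2IP (Ξ α) (Ξ γ) * form2IP (L * Ξ β - Ξ β * L) (Ξ γ)) ^ 2 =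
      (lam α - lam β) ^ 2 * (form2IP (L * Ξ α - Ξ α * L) (Ξ β)) ^ 2 := fun α β => by
    simp only [horth, mul_ite, mul_one, mul_zero, ite_mul, zero_mul, Finset.sum_ite_eq,
      Finset.mem_univ, if_true]
    rw [hanti β α]
    ring
  simp only [hterm]
  rw [Finset.sum_sum_eq_two_nsmul_sum_sum_Ioi, two_nsmul, two_mul]
  · intro α β
    rw [hanti α β]
    ring
  · intro α
    ring

/-- For a self-adjoint operator `𝔯` on a Lie subalgebra `𝔤 ⊆ 𝔰𝔬(m)` with orthonormal
eigenbasis `{Ξ_α}` and eigenvalues `{λ_α}`, with corresponding symmetric bilinear form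
`R(X,Y) = Σ_γ λ_γ ⟨X, Ξ_γ⟩⟨Y, Ξ_γ⟩`, and `L ∈ 𝔤` acting by
`(LR)(X,Y) = -R([L,X],Y) - R(X,[L,Y])`, one has
`|LR|² = 2 Σ_{α<β} (λ_α - λ_β)² g([L,Ξ_α], Ξ_β)²`. -/
theorem norm_sq_LR (m N : ℕ) (Ξ : Fin N → Matrix (Fin m) (Fin m) ℝ) (lam : Fin N → ℝ)
    (hskew : ∀ α, (Ξ α)ᵀ = -Ξ α)
    (horth : ∀ α β, form2IP (Ξ α) (Ξ β) = if α = β then 1 else 0)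
    (L : Matrix (Fin m) (Fin m) ℝ)
    (hL : L ∈ Submodule.span ℝ (Set.range Ξ))
    (hclosed : ∀ α, L * Ξ α - Ξ α * L ∈ Submodule.span ℝ (Set.range Ξ)) :
    ∑ α : Fin N, ∑ β : Fin N,
        (-(∑ γ : Fin N, lam γ * form2IP (L * Ξ α - Ξ α * L) (Ξ γ) * form2IP (Ξ β) (Ξ γ)) -
          ∑ γ : Fin N, lam γ * form2IP (Ξ α) (Ξ γ) * form2IP (L * Ξ β - Ξ β * L) (Ξ γ)) ^ 2 =
      2 * ∑ α : Fin N, ∑ β ∈ Finset.Ioi α,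
        (lam α - lam β) ^ 2 * (form2IP (L * Ξ α - Ξ α * L) (Ξ β)) ^ 2 :=
  norm_sq_LR_general m N Ξ lam hskew horth L hL
end
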